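/- If f : ℝ → ℝ and g : ℝ → ℝ are integrable and log-concave on ℝ, then their convolution f ∗ g is log-concave on ℝ. -/

import Mathlib

open MeasureTheory

/-- The convolution `(f ∗ g)(t) = ∫ f(t − τ) g(τ) dτ`. -/
noncomputable def conv (f g : ℝ → ℝ) (t : ℝ) : ℝ :=
  ∫ τ : ℝ, f (t - τ) * g τ

/-- `f` is log-concave on a set `S`: it is nonnegative on `S` and satisfies
`f(λx + (1−λ)y) ≥ f(x)^λ f(y)^{1−λ}` for `x, y ∈ S`, `λ ∈ [0,1]`. -/
def LogConcaveOn (S : Set ℝ) (f : ℝ → ℝ) : Prop :=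
  (∀ x ∈ S, 0 ≤ f x) ∧
    ∀ x ∈ S, ∀ y ∈ S, ∀ l : ℝ, 0 ≤ l → l ≤ 1 →
      f x ^ l * f y ^ (1 - l) ≤ f (l * x + (1 - l) * y)

open Set Pointwise

/-!
For `z = l x + (1 - l) y`, the integrands `τ ↦ f (x - τ) g τ`, `τ ↦ f (y - τ) g τ` and
`τ ↦ f (z - τ) g τ` satisfy the hypothesis of the Prékopa–Leindler inequality, because
`(x, τ) ↦ f (x - τ) g τ` is jointly log-concave; Prékopa–Leindler is then exactly the
log-concavity inequality for `f ∗ g`.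

Prékopa–Leindler on the line follows from the one-dimensional Brunn–Minkowski inequality
`|A| + |B| ≤ |A + B|`. After rescaling `F₁` and `F₂` to have supremum `1`, the hypothesis gives
`l • {F₁ > s} + (1 - l) • {F₂ > s} ⊆ {F > s}` with both sets nonempty for `s < 1`; integrating
over `s` (layer cake) yields `l ∫ F₁ + (1 - l) ∫ F₂ ≤ ∫ F`, and AM–GM turns this into the
geometric mean.

The rescaling, and the integrability of the integrands, need `f` and `g` bounded. An integrable
log-concave function is: if `f p ≤ f x` then `f ≥ √(f x f p)` on a segment of length
`|x - p| / 2`, so `f x f p (x - p)² ≤ 4 (∫ f)²`.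
-/

theorem MeasureTheory.NullMeasurableSet.exists_lt_isCompact {α : Type*} [MeasurableSpace α]
    [TopologicalSpace α] {μ : Measure α} [μ.InnerRegular] {A : Set α}
    (hA : NullMeasurableSet A μ) {r : ENNReal} (hr : r < μ A) :
    ∃ K ⊆ A, IsCompact K ∧ r < μ K := by
  obtain ⟨A', hA'A, hA', hA'_ae⟩ := hA.exists_measurable_subset_ae_eq
  obtain ⟨K, hKA', hK, hrK⟩ := hA'.exists_lt_isCompact (hr.trans_eq (measure_congr hA'_ae).symm)
  exact ⟨K, hKA'.trans hA'A, hK, hrK⟩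

namespace Real

theorem volume_add_volume_le_volume_add_of_isCompact {A B : Set ℝ} (hA : IsCompact A)
    (hB : IsCompact B) (hA₀ : A.Nonempty) (hB₀ : B.Nonempty) :
    volume A + volume B ≤ volume (A + B) := by
  set a := sSup A
  set b := sInf B
  have ha : a ∈ A := hA.sSup_mem hA₀
  have hb : b ∈ B := hB.sInf_mem hB₀
  -- `A + b` and `a + B` lie in `A + B` and meet only at `a + b`.
  have hinter : (A + {b}) ∩ ({a} + B) ⊆ {a + b} := by
    rintro _ ⟨⟨x, hx, _, rfl, rfl⟩, ⟨_, rfl, y, hy, hxy⟩⟩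
    have := le_csSup hA.bddAbove hx
    have := csInf_le hB.bddBelow hy
    have : x = a := by linarith
    simp_all
  calc volume A + volume B = volume (A + {b}) + volume ({a} + B) := by simp
    _ = volume ((A + {b}) ∪ ({a} + B)) + volume ((A + {b}) ∩ ({a} + B)) :=
      (measure_union_add_inter _ (isCompact_singleton.add hB).measurableSet).symm
    _ ≤ volume (A + B) + volume {a + b} := by
      gcongr
      exact union_subset (add_subset_add_left (singleton_subset_iff.2 hb))
        (add_subset_add_right (singleton_subset_iff.2 ha))
    _ = volume (A + B) := by simp

theorem volume_add_volume_le_volume_add {A B : Set ℝ} (hA : NullMeasurableSet A)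
    (hB : NullMeasurableSet B) (hA₀ : A.Nonempty) (hB₀ : B.Nonempty) :
    volume A + volume B ≤ volume (A + B) := by
  obtain ⟨a, ha⟩ := hA₀
  obtain ⟨b, hb⟩ := hB₀
  have hcompact : ∀ K ⊆ A, ∀ L ⊆ B, IsCompact K → IsCompact L →
      volume K + volume L ≤ volume (A + B) := by
    intro K hKA L hLB hK hL
    calc volume K + volume L ≤ volume (insert a K) + volume (insert b L) := by
          gcongr <;> exact subset_insert _ _
      _ ≤ volume (insert a K + insert b L) :=
        volume_add_volume_le_volume_add_of_isCompact (hK.insert a) (hL.insert b)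
          (insert_nonempty _ _) (insert_nonempty _ _)
      _ ≤ volume (A + B) :=
        measure_mono (add_subset_add (insert_subset ha hKA) (insert_subset hb hLB))
  have hAB : volume A ≤ volume (A + B) ∧ volume B ≤ volume (A + B) := by
    constructor
    · calc volume A = volume (A + {b}) := by simp
        _ ≤ volume (A + B) := measure_mono (add_subset_add_left (singleton_subset_iff.2 hb))
    · calc volume B = volume ({a} + B) := by simp
        _ ≤ volume (A + B) := measure_mono (add_subset_add_right (singleton_subset_iff.2 ha))
  by_contra! h
  rcases eq_or_ne (volume A) 0 with hA0 | hA0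
  · simp only [hA0, zero_add] at h
    exact h.not_ge hAB.2
  rcases eq_or_ne (volume B) 0 with hB0 | hB0
  · simp only [hB0, add_zero] at h
    exact h.not_ge hAB.1
  obtain ⟨u, hu, v, hv, huv⟩ := ENNReal.exists_lt_add_of_lt_add h hA0 hB0
  obtain ⟨K, hKA, hK, huK⟩ := hA.exists_lt_isCompact hu
  obtain ⟨L, hLB, hL, hvL⟩ := hB.exists_lt_isCompact hv
  exact (huv.trans (ENNReal.add_lt_add huK hvL)).not_ge (hcompact K hKA L hLB hK hL)

theorem ofReal_mul_volume_add_le_volume_smul_add_smul {A B : Set ℝ} {a b : ℝ} (ha : 0 ≤ a)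
    (hb : 0 ≤ b) (hA : NullMeasurableSet A) (hB : NullMeasurableSet B) (hA₀ : A.Nonempty)
    (hB₀ : B.Nonempty) :
    ENNReal.ofReal a * volume A + ENNReal.ofReal b * volume B ≤ volume (a • A + b • B) := by
  simpa [Measure.addHaar_smul_of_nonneg _ ha, Measure.addHaar_smul_of_nonneg _ hb] using
    volume_add_volume_le_volume_add (Measure.NullMeasurableSet.const_smul hA a)
      (Measure.NullMeasurableSet.const_smul hB b) hA₀.smul_set hB₀.smul_set

theorem min_le_rpow_mul_rpow {x y l : ℝ} (hx : 0 ≤ x) (hy : 0 ≤ y) (hl0 : 0 ≤ l) (hl1 : l ≤ 1) :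
    min x y ≤ x ^ l * y ^ (1 - l) :=
  calc min x y = min x y ^ l * min x y ^ (1 - l) := by
        rw [← rpow_add' (le_min hx hy) (by norm_num), add_sub_cancel, rpow_one]
    _ ≤ x ^ l * y ^ (1 - l) := by
        have hmin := le_min hx hy
        gcongr
        exacts [min_le_left x y, min_le_right x y]

theorem ofReal_mul_lintegral_add_le_lintegral_of_min_le {F₁ F₂ F : ℝ → ℝ} {a b S : ℝ}
    (ha : 0 ≤ a) (hb : 0 ≤ b) (hF₁ : ∀ t, 0 ≤ F₁ t) (hF₂ : ∀ t, 0 ≤ F₂ t) (hF : ∀ t, 0 ≤ F t)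
    (hF₁m : AEMeasurable F₁) (hF₂m : AEMeasurable F₂) (hFm : AEMeasurable F)
    (hS₁ : IsLUB (range F₁) S) (hS₂ : IsLUB (range F₂) S)
    (h : ∀ x y, min (F₁ x) (F₂ y) ≤ F (a * x + b * y)) :
    ENNReal.ofReal a * (∫⁻ t, ENNReal.ofReal (F₁ t)) +
        ENNReal.ofReal b * ∫⁻ t, ENNReal.ofReal (F₂ t) ≤ ∫⁻ t, ENNReal.ofReal (F t) := by
  have hmeas : ∀ G : ℝ → ℝ, Measurable fun s => volume {t | s < G t} := fun G =>
    Antitone.measurable fun s s' hss' => measure_mono fun t ht => hss'.trans_lt ht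
  rw [lintegral_eq_lintegral_meas_lt _ (ae_of_all _ hF₁) hF₁m,
    lintegral_eq_lintegral_meas_lt _ (ae_of_all _ hF₂) hF₂m,
    lintegral_eq_lintegral_meas_lt _ (ae_of_all _ hF) hFm,
    ← lintegral_const_mul _ (hmeas F₁), ← lintegral_const_mul _ (hmeas F₂),
    ← lintegral_add_left ((hmeas F₁).const_mul _)]
  refine lintegral_mono fun s => ?_
  by_cases hs : s < S
  · obtain ⟨_, ⟨x, rfl⟩, hx⟩ := (lt_isLUB_iff hS₁).1 hs
    obtain ⟨_, ⟨y, rfl⟩, hy⟩ := (lt_isLUB_iff hS₂).1 hs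
    refine (ofReal_mul_volume_add_le_volume_smul_add_smul ha hb
      (nullMeasurableSet_lt aemeasurable_const hF₁m) (nullMeasurableSet_lt aemeasurable_const hF₂m)
      ⟨x, hx⟩ ⟨y, hy⟩).trans (measure_mono ?_)
    rintro _ ⟨_, ⟨x, hx, rfl⟩, _, ⟨y, hy, rfl⟩, rfl⟩
    exact (lt_min hx hy).trans_le (h x y)
  · have hempty : ∀ G : ℝ → ℝ, IsLUB (range G) S → {t | s < G t} = ∅ := fun G hG =>
      eq_empty_of_forall_notMem fun t ht => hs (ht.trans_le (hG.1 (mem_range_self t)))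
    simp [hempty F₁ hS₁, hempty F₂ hS₂]

theorem mul_integral_add_le_integral_of_min_le {F₁ F₂ F : ℝ → ℝ} {a b S : ℝ}
    (ha : 0 ≤ a) (hb : 0 ≤ b) (hF₁ : ∀ t, 0 ≤ F₁ t) (hF₂ : ∀ t, 0 ≤ F₂ t) (hF : ∀ t, 0 ≤ F t)
    (hF₁i : Integrable F₁) (hF₂i : Integrable F₂) (hFi : Integrable F)
    (hS₁ : IsLUB (range F₁) S) (hS₂ : IsLUB (range F₂) S)
    (h : ∀ x y, min (F₁ x) (F₂ y) ≤ F (a * x + b * y)) :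
    a * (∫ t, F₁ t) + b * ∫ t, F₂ t ≤ ∫ t, F t := by
  have hI₁ : 0 ≤ ∫ t, F₁ t := integral_nonneg hF₁
  have hI₂ : 0 ≤ ∫ t, F₂ t := integral_nonneg hF₂
  rw [← ENNReal.ofReal_le_ofReal_iff (integral_nonneg hF), ENNReal.ofReal_add (by positivity)
    (by positivity), ENNReal.ofReal_mul ha, ENNReal.ofReal_mul hb,
    ofReal_integral_eq_lintegral_ofReal hF₁i (ae_of_all _ hF₁),
    ofReal_integral_eq_lintegral_ofReal hF₂i (ae_of_all _ hF₂),
    ofReal_integral_eq_lintegral_ofReal hFi (ae_of_all _ hF)]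
  exact ofReal_mul_lintegral_add_le_lintegral_of_min_le ha hb hF₁ hF₂ hF hF₁i.aemeasurable
    hF₂i.aemeasurable hFi.aemeasurable hS₁ hS₂ h

theorem isLUB_range_inv_mul {ι : Type*} {G : ι → ℝ} {S : ℝ} (hG : IsLUB (range G) S)
    (hS : 0 < S) : IsLUB (range fun t => S⁻¹ * G t) 1 := by
  have := hG.mul_left (inv_nonneg.2 hS.le)
  rwa [← range_comp, inv_mul_cancel₀ hS.ne'] at this

theorem eq_zero_of_sSup_range_nonpos {ι : Type*} {G : ι → ℝ} (hG : ∀ t, 0 ≤ G t)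
    (hbG : BddAbove (range G)) (hS : sSup (range G) ≤ 0) : G = 0 :=
  funext fun t => le_antisymm ((le_csSup hbG (mem_range_self t)).trans hS) (hG t)

theorem prekopa_leindler {F₁ F₂ F : ℝ → ℝ} {l : ℝ} (hl0 : 0 < l) (hl1 : l < 1)
    (hF₁ : ∀ t, 0 ≤ F₁ t) (hF₂ : ∀ t, 0 ≤ F₂ t) (hF : ∀ t, 0 ≤ F t)
    (hF₁i : Integrable F₁) (hF₂i : Integrable F₂) (hFi : Integrable F)
    (hb₁ : BddAbove (range F₁)) (hb₂ : BddAbove (range F₂))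
    (h : ∀ x y, F₁ x ^ l * F₂ y ^ (1 - l) ≤ F (l * x + (1 - l) * y)) :
    (∫ t, F₁ t) ^ l * (∫ t, F₂ t) ^ (1 - l) ≤ ∫ t, F t := by
  have hl1' : 0 < 1 - l := sub_pos.2 hl1
  have hI₁ : 0 ≤ ∫ t, F₁ t := integral_nonneg hF₁
  have hI₂ : 0 ≤ ∫ t, F₂ t := integral_nonneg hF₂
  have hI : 0 ≤ ∫ t, F t := integral_nonneg hF
  rcases le_or_gt (sSup (range F₁)) 0 with hS₁ | hS₁
  · simp [eq_zero_of_sSup_range_nonpos hF₁ hb₁ hS₁, zero_rpow hl0.ne', hI]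
  rcases le_or_gt (sSup (range F₂)) 0 with hS₂ | hS₂
  · simp [eq_zero_of_sSup_range_nonpos hF₂ hb₂ hS₂, zero_rpow hl1'.ne', hI]
  set S₁ := sSup (range F₁)
  set S₂ := sSup (range F₂)
  set C := S₁ ^ l * S₂ ^ (1 - l)
  have hC : 0 < C := by positivity
  have hscale : ∀ u v : ℝ, 0 ≤ u → 0 ≤ v →
      (S₁⁻¹ * u) ^ l * (S₂⁻¹ * v) ^ (1 - l) = C⁻¹ * (u ^ l * v ^ (1 - l)) := by
    intro u v hu hv
    rw [mul_rpow (by positivity) hu, mul_rpow (by positivity) hv, inv_rpow hS₁.le,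
      inv_rpow hS₂.le, mul_inv]
    ring
  have key := mul_integral_add_le_integral_of_min_le (F := fun t => C⁻¹ * F t) hl0.le hl1'.le
    (fun t => mul_nonneg (inv_nonneg.2 hS₁.le) (hF₁ t))
    (fun t => mul_nonneg (inv_nonneg.2 hS₂.le) (hF₂ t))
    (fun t => mul_nonneg (inv_nonneg.2 hC.le) (hF t))
    (hF₁i.const_mul _) (hF₂i.const_mul _) (hFi.const_mul _)
    (isLUB_range_inv_mul (isLUB_csSup (range_nonempty _) hb₁) hS₁)
    (isLUB_range_inv_mul (isLUB_csSup (range_nonempty _) hb₂) hS₂) fun x y => by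
      calc min (S₁⁻¹ * F₁ x) (S₂⁻¹ * F₂ y) ≤ (S₁⁻¹ * F₁ x) ^ l * (S₂⁻¹ * F₂ y) ^ (1 - l) :=
            min_le_rpow_mul_rpow (by positivity [hF₁ x]) (by positivity [hF₂ y]) hl0.le hl1.le
        _ = C⁻¹ * (F₁ x ^ l * F₂ y ^ (1 - l)) := hscale _ _ (hF₁ x) (hF₂ y)
        _ ≤ C⁻¹ * F (l * x + (1 - l) * y) := by gcongr; exact h x y
  simp only [integral_const_mul] at key
  calc (∫ t, F₁ t) ^ l * (∫ t, F₂ t) ^ (1 - l)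
      = C * ((S₁⁻¹ * ∫ t, F₁ t) ^ l * (S₂⁻¹ * ∫ t, F₂ t) ^ (1 - l)) := by
        rw [hscale _ _ hI₁ hI₂, mul_inv_cancel_left₀ hC.ne']
    _ ≤ C * (l * (S₁⁻¹ * ∫ t, F₁ t) + (1 - l) * (S₂⁻¹ * ∫ t, F₂ t)) := by
        gcongr
        exact geom_mean_le_arith_mean2_weighted hl0.le hl1'.le (by positivity) (by positivity)
          (by ring)
    _ ≤ C * (C⁻¹ * ∫ t, F t) := by gcongr
    _ = ∫ t, F t := mul_inv_cancel_left₀ hC.ne' _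

end Real

namespace LogConcaveOn

variable {S : Set ℝ} {f : ℝ → ℝ}

theorem min_le (hf : LogConcaveOn S f) {x y l : ℝ} (hx : x ∈ S) (hy : y ∈ S) (hl0 : 0 ≤ l)
    (hl1 : l ≤ 1) : min (f x) (f y) ≤ f (l * x + (1 - l) * y) :=
  (Real.min_le_rpow_mul_rpow (hf.1 x hx) (hf.1 y hy) hl0 hl1).trans (hf.2 x hx y hy l hl0 hl1)

theorem quasiconcaveOn (hf : LogConcaveOn S f) (hS : Convex ℝ S) : QuasiconcaveOn ℝ S f := by
  rintro r x ⟨hx, hrx⟩ y ⟨hy, hry⟩ a b ha hb hab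
  obtain rfl : b = 1 - a := by linarith
  exact ⟨hS hx hy ha hb hab, (le_min hrx hry).trans (hf.min_le hx hy ha (by linarith))⟩

theorem mul_mul_sq_sub_le_integral_sq (hf : LogConcaveOn univ f) (hfi : Integrable f) {p x : ℝ}
    (hpx : f p ≤ f x) : f x * f p * (x - p) ^ 2 ≤ 4 * (∫ t, f t) ^ 2 := by
  have hf0 : ∀ t, 0 ≤ f t := fun t => hf.1 t trivial
  set r := √(f x * f p)
  have hrm : r ≤ f ((x + p) / 2) := by
    have := hf.2 x trivial p trivial (1 / 2) (by norm_num) (by norm_num)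
    rwa [show (1 : ℝ) - 1 / 2 = 1 / 2 by norm_num, ← Real.mul_rpow (hf0 x) (hf0 p),
      ← Real.sqrt_eq_rpow, show 1 / 2 * x + 1 / 2 * p = (x + p) / 2 by ring] at this
  have hrx : r ≤ f x := by
    calc r ≤ √(f x * f x) := Real.sqrt_le_sqrt (mul_le_mul_of_nonneg_left hpx (hf0 x))
      _ = f x := Real.sqrt_mul_self (hf0 x)
  have hseg : uIcc ((x + p) / 2) x ⊆ {t | r ≤ f t} := by
    rw [← segment_eq_uIcc]
    exact fun t ht => ((hf.quasiconcaveOn convex_univ r).segment_subset ⟨trivial, hrm⟩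
      ⟨trivial, hrx⟩ ht).2
  have hI : r * |x - (x + p) / 2| ≤ ∫ t, f t :=
    calc r * |x - (x + p) / 2| = ∫ _ in uIcc ((x + p) / 2) x, r := by simp [mul_comm]
      _ ≤ ∫ t in uIcc ((x + p) / 2) x, f t :=
        setIntegral_mono_on (integrableOn_const (by simp [Real.volume_interval]))
          hfi.integrableOn measurableSet_uIcc hseg
      _ ≤ ∫ t, f t := setIntegral_le_integral hfi (ae_of_all _ hf0)
  have hxm : |x - (x + p) / 2| = |x - p| / 2 := by
    rw [show x - (x + p) / 2 = (x - p) / 2 by ring, abs_div, abs_two]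
  calc f x * f p * (x - p) ^ 2 = (r * |x - p|) ^ 2 := by
        rw [mul_pow, Real.sq_sqrt (mul_nonneg (hf0 x) (hf0 p)), sq_abs]
    _ ≤ (2 * ∫ t, f t) ^ 2 := by
        rw [hxm] at hI
        exact pow_le_pow_left₀ (by positivity) (by linarith) 2
    _ = 4 * (∫ t, f t) ^ 2 := by ring

theorem bddAbove_range (hf : LogConcaveOn univ f) (hfi : Integrable f) : BddAbove (range f) := by
  by_cases htwo : ∃ p q, p < q ∧ 0 < f p ∧ 0 < f q
  swap
  · have hsub : {x | 0 < f x}.Subsingleton := fun x hx y hy => by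
      by_contra hxy
      rcases lt_or_gt_of_ne hxy with h | h
      exacts [htwo ⟨x, y, h, hx, hy⟩, htwo ⟨y, x, h, hy, hx⟩]
    refine ((hsub.finite.image f).bddAbove.union (bddAbove_Iic (a := 0))).mono ?_
    rintro _ ⟨x, rfl⟩
    by_cases hx : 0 < f x
    exacts [Or.inl ⟨x, hx, rfl⟩, Or.inr (not_lt.1 hx)]
  obtain ⟨p, q, hpq, hp, hq⟩ := htwo
  set c := min (f p) (f q)
  refine ⟨max (max (f p) (f q)) (4 * (∫ t, f t) ^ 2 / (c * ((q - p) / 2) ^ 2)), ?_⟩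
  rintro _ ⟨x, rfl⟩
  obtain ⟨z, hz, hzd⟩ : ∃ z, (z = p ∨ z = q) ∧ (q - p) / 2 ≤ |x - z| := by
    rcases le_total x ((p + q) / 2) with h | h
    · exact ⟨q, Or.inr rfl, by rw [abs_sub_comm, abs_of_nonneg] <;> linarith⟩
    · exact ⟨p, Or.inl rfl, by rw [abs_of_nonneg] <;> linarith⟩
  have hcz : c ≤ f z ∧ f z ≤ max (f p) (f q) := by
    rcases hz with rfl | rfl <;> simp [c]
  rcases le_total (f x) (f z) with hxz | hzx
  · exact le_max_of_le_left (hxz.trans hcz.2)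
  · refine le_max_of_le_right ((le_div_iff₀ (by positivity)).2 ?_)
    have hz0 : 0 ≤ f z := (lt_min hp hq).le.trans hcz.1
    calc f x * (c * ((q - p) / 2) ^ 2) ≤ f x * (f z * |x - z| ^ 2) := by
          have := hf.1 x trivial
          gcongr
          exact hcz.1
      _ ≤ 4 * (∫ t, f t) ^ 2 := by
          rw [sq_abs, ← mul_assoc]
          exact hf.mul_mul_sq_sub_le_integral_sq hfi hzx

theorem rpow_mul_rpow_le_comp_sub_mul {g : ℝ → ℝ} (hf : LogConcaveOn univ f) (hg : LogConcaveOn univ g) {l : ℝ}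
    (hl0 : 0 ≤ l) (hl1 : l ≤ 1) (x y a b : ℝ) :
    (f (x - a) * g a) ^ l * (f (y - b) * g b) ^ (1 - l) ≤
      f (l * x + (1 - l) * y - (l * a + (1 - l) * b)) * g (l * a + (1 - l) * b) := by
  have hf0 : ∀ t, 0 ≤ f t := fun t => hf.1 t trivial
  have hg0 : ∀ t, 0 ≤ g t := fun t => hg.1 t trivial
  rw [Real.mul_rpow (hf0 _) (hg0 _), Real.mul_rpow (hf0 _) (hg0 _), mul_mul_mul_comm,
    show l * x + (1 - l) * y - (l * a + (1 - l) * b) = l * (x - a) + (1 - l) * (y - b) by ring]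
  exact mul_le_mul (hf.2 _ trivial _ trivial l hl0 hl1) (hg.2 _ trivial _ trivial l hl0 hl1)
    (mul_nonneg (Real.rpow_nonneg (hg0 _) _) (Real.rpow_nonneg (hg0 _) _)) (hf0 _)

end LogConcaveOn

/-- The convolution of two integrable log-concave functions is log-concave. -/
theorem conv_log_concave (f g : ℝ → ℝ)
    (hf_int : Integrable f) (hg_int : Integrable g)
    (hf : LogConcaveOn Set.univ f) (hg : LogConcaveOn Set.univ g) :
    LogConcaveOn Set.univ (conv f g) := by
  have hf0 : ∀ t, 0 ≤ f t := fun t => hf.1 t trivial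
  have hg0 : ∀ t, 0 ≤ g t := fun t => hg.1 t trivial
  obtain ⟨Mf, hMf⟩ := hf.bddAbove_range hf_int
  obtain ⟨Mg, hMg⟩ := hg.bddAbove_range hg_int
  have hF0 : ∀ x τ, 0 ≤ f (x - τ) * g τ := fun x τ => mul_nonneg (hf0 _) (hg0 _)
  have hFi : ∀ x, Integrable fun τ => f (x - τ) * g τ := fun x =>
    hg_int.bdd_mul (hf_int.comp_sub_left x).aestronglyMeasurable
      (ae_of_all _ fun τ => (Real.norm_of_nonneg (hf0 _)).trans_le (hMf (mem_range_self _)))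
  have hFb : ∀ x, BddAbove (range fun τ => f (x - τ) * g τ) := fun x =>
    ⟨Mf * Mg, by
      rintro _ ⟨τ, rfl⟩
      exact mul_le_mul (hMf (mem_range_self _)) (hMg (mem_range_self _)) (hg0 _)
        ((hf0 0).trans (hMf (mem_range_self 0)))⟩
  refine ⟨fun x _ => integral_nonneg (hF0 x), fun x _ y _ l hl0 hl1 => ?_⟩
  rcases hl0.eq_or_lt with rfl | hl0'
  · simp
  rcases hl1.eq_or_lt with rfl | hl1'
  · simp
  exact Real.prekopa_leindler hl0' hl1' (hF0 x) (hF0 y) (hF0 _) (hFi x) (hFi y) (hFi _) (hFb x)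
    (hFb y) (hf.rpow_mul_rpow_le_comp_sub_mul hg hl0 hl1 x y)
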